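/- arXiv:2504.20618 — 2 statements merged into one kernel-verified Lean document; each statement's English description precedes it below -/
import Mathlib

section
/- Let E be the Euclidean space ℝ³ with the standard inner product ⟨·,·⟩ and norm ‖·‖. Let n ∈ E be a unit vector, and let n₁, n₂ ∈ E be vectors whose projections onto the hyperplane orthogonal to n, defined by p₁ := n₁ − ⟨n₁, n⟩·n and p₂ := n₂ − ⟨n₂, n⟩·n, are both nonzero. Let d ≥ 0, let q₁ ∈ E, and let S ⊆ E be a set such that ⟨n₁, x − q₁⟩ ≤ 0 for every x ∈ S. Then for every x ∈ S, ⟨n₁, (x + (d/2)·(p₂/‖p₂‖)) − (q₁ + (d/2)·(p₁/‖p₁‖))⟩ ≤ 0. (That is, after shifting the set S by (d/2)·p₂/‖p₂‖ and the halfspace base point q₁ by (d/2)·p₁/‖p₁‖, the shifted set remains contained in the shifted non-positive halfspace {y : ⟨n₁, y − q₁ − (d/2)·p₁/‖p₁‖⟩ ≤ 0}.) -/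
/-!
Write `p₁`, `p₂` for the components of `n₁`, `n₂` orthogonal to the unit vector `n`.
Since `p₂ ⟂ n`, the functional `⟪n₁, ·⟫` agrees with `⟪p₁, ·⟫` on it, so by Cauchy–Schwarz
the shift of `S` moves `⟪n₁, ·⟫` by at most `(d / 2) ‖p₁‖`, which is exactly how much the
shift of `q₁` moves it.
-/

open RealInnerProductSpace

section OrthogonalComponent

variable {E : Type*} [NormedAddCommGroup E] [InnerProductSpace ℝ E]

lemma inner_sub_inner_smul_left_of_inner_eq_zero {n v : E} (a : E) (hv : ⟪n, v⟫ = 0) :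
    ⟪a - ⟪a, n⟫ • n, v⟫ = ⟪a, v⟫ := by
  rw [inner_sub_left, real_inner_smul_left, hv, mul_zero, sub_zero]

lemma inner_sub_inner_smul_right_eq_zero {n : E} (hn : ‖n‖ = 1) (a : E) :
    ⟪n, a - ⟪a, n⟫ • n⟫ = 0 := by
  rw [inner_sub_right, real_inner_smul_right, real_inner_self_eq_norm_sq, hn, one_pow,
    mul_one, real_inner_comm, sub_self]

lemma inner_smul_inv_norm_le_norm (p q : E) : ⟪p, ‖q‖⁻¹ • q⟫ ≤ ‖p‖ :=
  calc ⟪p, ‖q‖⁻¹ • q⟫ ≤ ‖p‖ * ‖‖q‖⁻¹ • q‖ := real_inner_le_norm _ _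
    _ ≤ ‖p‖ * 1 := by
        gcongr
        rw [norm_smul, norm_inv, norm_norm]
        exact inv_mul_le_one_of_le₀ le_rfl (norm_nonneg q)
    _ = ‖p‖ := mul_one _

lemma inner_normalize_sub_inner_smul {n : E} (hn : ‖n‖ = 1) (a : E) :
    ⟪a, ‖a - ⟪a, n⟫ • n‖⁻¹ • (a - ⟪a, n⟫ • n)⟫ = ‖a - ⟪a, n⟫ • n‖ := by
  rw [real_inner_smul_right,
    ← inner_sub_inner_smul_left_of_inner_eq_zero a (inner_sub_inner_smul_right_eq_zero hn a),
    real_inner_self_eq_norm_sq, sq, ← mul_assoc]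
  rcases eq_or_ne ‖a - ⟪a, n⟫ • n‖ 0 with h | h
  · simp [h]
  · rw [inv_mul_cancel₀ h, one_mul]

lemma inner_normalize_sub_inner_smul_le {n : E} (hn : ‖n‖ = 1) (a b : E) :
    ⟪a, ‖b - ⟪b, n⟫ • n‖⁻¹ • (b - ⟪b, n⟫ • n)⟫ ≤
      ⟪a, ‖a - ⟪a, n⟫ • n‖⁻¹ • (a - ⟪a, n⟫ • n)⟫ := by
  have hperp : ⟪n, ‖b - ⟪b, n⟫ • n‖⁻¹ • (b - ⟪b, n⟫ • n)⟫ = 0 := by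
    rw [real_inner_smul_right, inner_sub_inner_smul_right_eq_zero hn, mul_zero]
  rw [inner_normalize_sub_inner_smul hn, ← inner_sub_inner_smul_left_of_inner_eq_zero a hperp]
  exact inner_smul_inv_norm_le_norm _ _

end OrthogonalComponent

theorem stmt0_general
    (n n₁ n₂ : EuclideanSpace ℝ (Fin 3)) (hn : ‖n‖ = 1)
    (p₁ p₂ : EuclideanSpace ℝ (Fin 3))
    (hp₁ : p₁ = n₁ - ⟪n₁, n⟫ • n) (hp₂ : p₂ = n₂ - ⟪n₂, n⟫ • n)
    (d : ℝ) (hd : 0 ≤ d)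
    (q₁ : EuclideanSpace ℝ (Fin 3)) (S : Set (EuclideanSpace ℝ (Fin 3)))
    (hS : ∀ x ∈ S, ⟪n₁, x - q₁⟫ ≤ 0) :
    ∀ x ∈ S,
      ⟪n₁, (x + (d / 2) • (‖p₂‖⁻¹ • p₂)) - (q₁ + (d / 2) • (‖p₁‖⁻¹ • p₁))⟫ ≤ 0 := by
  intro x hx
  have hshift : ⟪n₁, ‖p₂‖⁻¹ • p₂⟫ ≤ ⟪n₁, ‖p₁‖⁻¹ • p₁⟫ := by
    subst hp₁ hp₂
    exact inner_normalize_sub_inner_smul_le hn n₁ n₂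
  rw [add_sub_add_comm, inner_add_right, ← smul_sub, real_inner_smul_right,
    inner_sub_right n₁ (‖p₂‖⁻¹ • p₂)]
  have hscaled :=
    mul_le_mul_of_nonneg_left (sub_nonpos.mpr hshift) (by positivity : (0 : ℝ) ≤ d / 2)
  linarith [hS x hx]

/-- Lemma 1 (first part): shifting a set contained in the non-positive halfspace of a
surface, together with the halfspace base point, along the normalized projections onto
the hyperplane orthogonal to the unit vector `n`, preserves the containment. -/
theorem stmt0
    (n n₁ n₂ : EuclideanSpace ℝ (Fin 3)) (hn : ‖n‖ = 1)
    (p₁ p₂ : EuclideanSpace ℝ (Fin 3))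
    (hp₁ : p₁ = n₁ - ⟪n₁, n⟫ • n) (hp₂ : p₂ = n₂ - ⟪n₂, n⟫ • n)
    (hp₁0 : p₁ ≠ 0) (hp₂0 : p₂ ≠ 0)
    (d : ℝ) (hd : 0 ≤ d)
    (q₁ : EuclideanSpace ℝ (Fin 3)) (S : Set (EuclideanSpace ℝ (Fin 3)))
    (hS : ∀ x ∈ S, ⟪n₁, x - q₁⟫ ≤ 0) :
    ∀ x ∈ S,
      ⟪n₁, (x + (d / 2) • (‖p₂‖⁻¹ • p₂)) - (q₁ + (d / 2) • (‖p₁‖⁻¹ • p₁))⟫ ≤ 0 :=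
  stmt0_general n n₁ n₂ hn p₁ p₂ hp₁ hp₂ d hd q₁ S hS
end

section
/- Let n be a finite type, let Σ be an n×n complex positive semidefinite Hermitian matrix, let ι be a nonempty finite index set, let B : ι → Matrix n n ℂ be a family of positive definite Hermitian matrices, and let w : ι → ℝ be nonnegative weights with ∑ᵢ wᵢ = 1. Then the convex combination ∑ᵢ wᵢ • Bᵢ is positive definite (hence invertible), and Re(trace((∑ᵢ wᵢ • Bᵢ)⁻¹ * Σ)) ≤ ∑ᵢ wᵢ · Re(trace(Bᵢ⁻¹ * Σ)); that is, the function B ↦ Re(trace(B⁻¹ Σ)) is convex on the set of positive definite Hermitian matrices. -/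
/-!
Inversion is operator convex on positive definite matrices: with `M = ∑ wᵢ Bᵢ`, each
`(Bᵢ⁻¹ - M⁻¹) Bᵢ (Bᵢ⁻¹ - M⁻¹) = Bᵢ⁻¹ - 2 M⁻¹ + M⁻¹ Bᵢ M⁻¹` is positive semidefinite, and
averaging these with the weights `wᵢ` (the last terms average to `M⁻¹ M M⁻¹ = M⁻¹`) shows that
`∑ wᵢ Bᵢ⁻¹ - M⁻¹` is positive semidefinite. Pairing with `Σ` preserves this order, since the
trace of a product of two positive semidefinite matrices is nonnegative.
-/

open Matrix
open scoped BigOperators ComplexOrder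

namespace Matrix

lemma inv_sub_mul_mul_inv_sub {n R : Type*} [Fintype n] [DecidableEq n] [CommRing R]
    {B : Matrix n n R} (hB : IsUnit B.det) (X : Matrix n n R) :
    (B⁻¹ - X) * B * (B⁻¹ - X) = B⁻¹ - X - X + X * B * X := by
  simp only [sub_mul, mul_sub, nonsing_inv_mul _ hB, mul_nonsing_inv_cancel_right _ _ hB, one_mul]
  abel

variable {n 𝕜 : Type*} [RCLike 𝕜]

lemma posDef_sum_smul {ι : Type*} [Fintype ι] {B : ι → Matrix n n 𝕜} (hB : ∀ i, (B i).PosDef)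
    {w : ι → ℝ} (hw : ∀ i, 0 ≤ w i) (hpos : 0 < ∑ i, w i) : (∑ i, w i • B i).PosDef := by
  classical
  obtain ⟨i₀, -, hi₀⟩ := Finset.exists_lt_of_sum_lt (s := .univ) (f := 0) (g := w)
    (by simpa using hpos)
  rw [← Finset.add_sum_erase _ _ (Finset.mem_univ i₀)]
  exact ((hB i₀).smul hi₀).add_posSemidef
    (posSemidef_sum _ fun i _ => (hB i).posSemidef.smul (hw i))

variable [Fintype n] [DecidableEq n]

lemma PosSemidef.trace_mul_nonneg {A S : Matrix n n 𝕜} (hA : A.PosSemidef)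
    (hS : S.PosSemidef) : 0 ≤ (A * S).trace := by
  obtain ⟨X, rfl⟩ : ∃ X : Matrix n n 𝕜, A = star X * X := by
    open scoped MatrixOrder in exact CStarAlgebra.nonneg_iff_eq_star_mul_self.mp hA.nonneg
  rw [star_eq_conjTranspose, mul_assoc, trace_mul_comm]
  exact (hS.mul_mul_conjTranspose_same X).trace_nonneg

lemma re_trace_mul_le_of_posSemidef_sub {P Q S : Matrix n n 𝕜}
    (hPQ : (Q - P).PosSemidef) (hS : S.PosSemidef) :
    RCLike.re (P * S).trace ≤ RCLike.re (Q * S).trace := by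
  have h := (RCLike.nonneg_iff.mp (hPQ.trace_mul_nonneg hS)).1
  rwa [sub_mul, trace_sub, map_sub, sub_nonneg] at h

theorem posSemidef_sum_smul_inv_sub_inv_sum_smul {ι : Type*} [Fintype ι]
    {B : ι → Matrix n n 𝕜} (hB : ∀ i, (B i).PosDef) {w : ι → ℝ} (hw : ∀ i, 0 ≤ w i)
    (hw1 : ∑ i, w i = 1) :
    (∑ i, w i • (B i)⁻¹ - (∑ i, w i • B i)⁻¹).PosSemidef := by
  set M := ∑ i, w i • B i
  have hM : M.PosDef := posDef_sum_smul hB hw (hw1 ▸ one_pos)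
  have hMM : M⁻¹ * M * M⁻¹ = M⁻¹ := by
    rw [nonsing_inv_mul _ ((isUnit_iff_isUnit_det M).mp hM.isUnit), one_mul]
  have hsum : ∑ i, w i • (((B i)⁻¹ - M⁻¹) * B i * ((B i)⁻¹ - M⁻¹)) =
      ∑ i, w i • (B i)⁻¹ - M⁻¹ := by
    have hB' : ∀ i, IsUnit (B i).det := fun i => (isUnit_iff_isUnit_det _).mp (hB i).isUnit
    have hconj : ∑ i, w i • (M⁻¹ * B i * M⁻¹) = M⁻¹ * M * M⁻¹ := by
      simp only [M, Finset.mul_sum, Finset.sum_mul, mul_smul_comm, smul_mul_assoc]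
    simp only [inv_sub_mul_mul_inv_sub (hB' _), smul_add, smul_sub, Finset.sum_add_distrib,
      Finset.sum_sub_distrib, ← Finset.sum_smul, hw1, one_smul, hconj, hMM]
    abel
  rw [← hsum]
  refine posSemidef_sum _ fun i _ => PosSemidef.smul ?_ (hw i)
  have hherm : ((B i)⁻¹ - M⁻¹)ᴴ = (B i)⁻¹ - M⁻¹ :=
    ((hB i).inv.isHermitian.sub hM.inv.isHermitian).eq
  simpa only [hherm] using (hB i).posSemidef.mul_mul_conjTranspose_same ((B i)⁻¹ - M⁻¹)

end Matrix

theorem stmt8_general {n : Type*} [Fintype n] [DecidableEq n]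
    (Sig : Matrix n n ℂ) (hSig : Sig.PosSemidef)
    {ι : Type*} [Fintype ι]
    (B : ι → Matrix n n ℂ) (hB : ∀ i, (B i).PosDef)
    (w : ι → ℝ) (hw : ∀ i, 0 ≤ w i) (hw1 : ∑ i, w i = 1) :
    (∑ i, w i • B i).PosDef ∧
      ((∑ i, w i • B i)⁻¹ * Sig).trace.re ≤ ∑ i, w i * ((B i)⁻¹ * Sig).trace.re := by
  refine ⟨posDef_sum_smul hB hw (hw1 ▸ one_pos), ?_⟩
  have h := re_trace_mul_le_of_posSemidef_sub
    (posSemidef_sum_smul_inv_sub_inv_sum_smul hB hw hw1) hSig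
  simpa [Finset.sum_mul, trace_sum, smul_mul_assoc, trace_smul] using h

/-- Convexity of `B ↦ Re(trace(B⁻¹ Σ))` on positive definite Hermitian matrices, for a
positive semidefinite `Σ`: any convex combination of positive definite matrices is
positive definite, and the value at the combination is at most the combination of the
values (finitely supported Jensen's inequality). -/
theorem stmt8 {n : Type*} [Fintype n] [DecidableEq n]
    (Sig : Matrix n n ℂ) (hSig : Sig.PosSemidef)
    {ι : Type*} [Fintype ι] [Nonempty ι]
    (B : ι → Matrix n n ℂ) (hB : ∀ i, (B i).PosDef)
    (w : ι → ℝ) (hw : ∀ i, 0 ≤ w i) (hw1 : ∑ i, w i = 1) :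
    (∑ i, w i • B i).PosDef ∧
      ((∑ i, w i • B i)⁻¹ * Sig).trace.re ≤ ∑ i, w i * ((B i)⁻¹ * Sig).trace.re :=
  stmt8_general Sig hSig B hB w hw hw1
end
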